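/- Let G be a finitely generated virtually abelian subgroup of PGL_{d+1}(ℂ). Then there exists a finite index subgroup G' ⊆ G such that the natural action of G' on ℙ^d(ℂ) has a fixed point. -/

import Mathlib

/-!
Fix a finite index abelian subgroup of `G` and lift finitely many generators of it to `GL_n`.
The commutator of two lifts is a scalar matrix of determinant `1`, hence an `n`-th root of unity,
so the group `L` generated by the lifts is finitely generated with finitely many commutators, and
by Schur's argument its center has finite index. The image of that center is a finite index
subgroup of `G` whose lifts all commute, since they differ from central elements of `L` by scalars;
and commuting matrices over `ℂ` have a common eigenvector.
-/

/-- The projective general linear group `PGL_n(ℂ) = GL_n(ℂ) / center`. -/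
abbrev PGL (n : ℕ) : Type :=
  Matrix.GeneralLinearGroup (Fin n) ℂ ⧸ Subgroup.center (Matrix.GeneralLinearGroup (Fin n) ℂ)

open Subgroup
open scoped commutatorElement

theorem Subgroup.exists_relIndex_ne_zero_forall_commute_of_ker_le_center
    {Γ Q : Type*} [Group Γ] [Group Q] {π : Γ →* Q} (hπ : Function.Surjective π)
    (hker : π.ker ≤ center Γ) {K : Subgroup Q} (hK : K.FG) {T : Set Γ} (hT : T.Finite)
    (hcomm : ∀ a b, π a ∈ K → π b ∈ K → ⁅a, b⁆ ∈ T) :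
    ∃ J ≤ K, J.relIndex K ≠ 0 ∧ ∀ a b, π a ∈ J → π b ∈ J → Commute a b := by
  obtain ⟨S, hS⟩ := hK
  set L := closure (Function.surjInv hπ '' S)
  have hLK : L.map π = K := by
    rw [MonoidHom.map_closure, ← Set.image_comp, Function.comp_surjInv, Set.image_id, hS]
  have hL : ∀ a : L, π a ∈ K := fun a => hLK ▸ mem_map_of_mem π a.2
  have : Group.FG L := Group.closure_finite_fg _
  have : Finite (commutatorSet L) := by
    refine Set.Finite.to_subtype <| Set.Finite.of_finite_image (f := L.subtype)
      (hT.subset ?_) L.subtype_injective.injOn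
    rintro _ ⟨_, ⟨a, b, rfl⟩, rfl⟩
    exact hcomm a b (hL a) (hL b)
  let f : L →* K := (π.comp L.subtype).codRestrict K hL
  have hf : Function.Surjective f := by
    rintro ⟨q, hq⟩
    rw [← hLK] at hq
    obtain ⟨a, ha, rfl⟩ := hq
    exact ⟨⟨a, ha⟩, rfl⟩
  refine ⟨((center L).map f).map K.subtype, map_subtype_le _, ?_, ?_⟩
  · rw [relIndex, subgroupOf, comap_map_eq_self_of_injective K.subtype_injective]
    -- `center L` has finite index by Schur's theorem, the instance `Subgroup.finiteIndex_center`.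
    exact ne_zero_of_dvd_ne_zero FiniteIndex.index_ne_zero (index_map_dvd _ hf)
  · have central : ∀ {z : Γ}, z ∈ center Γ → ∀ x, Commute x z := fun hz x =>
      mem_center_iff.mp hz x
    have lift : ∀ a (c : L), π c = π a → ∃ z ∈ center Γ, a = c * z := fun a c h =>
      ⟨(c : Γ)⁻¹ * a, hker (by simp [MonoidHom.mem_ker, h]), by group⟩
    intro a b ha hb
    obtain ⟨_, ⟨c, hc, rfl⟩, hca⟩ := mem_map.mp ha
    obtain ⟨_, ⟨c', -, rfl⟩, hcb⟩ := mem_map.mp hb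
    obtain ⟨z, hz, rfl⟩ := lift a c hca
    obtain ⟨w, hw, rfl⟩ := lift b c' hcb
    have hcc' : Commute (c : Γ) c' := congrArg Subtype.val (mem_center_iff.mp hc c').symm
    exact (hcc'.mul_right (central hw c)).mul_left (central hz _).symm

namespace Matrix.GeneralLinearGroup

variable {n R : Type*} [Fintype n] [DecidableEq n] [CommRing R]

lemma commutatorElement_mem_center_inf_ker_det {A B : GL n R}
    (h : Commute (A : GL n R ⧸ center (GL n R)) B) : ⁅A, B⁆ ∈ center (GL n R) ⊓ det.ker := by
  refine mem_inf.mpr ⟨(QuotientGroup.eq_one_iff _).mp ?_, ?_⟩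
  · rw [← QuotientGroup.mk'_apply, map_commutatorElement, commutatorElement_eq_one_iff_commute]
    exact h
  · rw [MonoidHom.mem_ker, map_commutatorElement, commutatorElement_eq_one_iff_commute]
    exact Commute.all _ _

lemma finite_center_inf_ker_det [Nonempty n] [IsDomain R] :
    ((center (GL n R) ⊓ det.ker : Subgroup (GL n R)) : Set (GL n R)).Finite := by
  have : NeZero (Fintype.card n) := ⟨Fintype.card_ne_zero⟩
  have hroots : (rootsOfUnity (Fintype.card n) R : Set Rˣ).Finite :=
    Set.finite_coe_iff.mp (inferInstanceAs (Finite (rootsOfUnity _ R)))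
  refine (hroots.image (scalar n)).subset ?_
  rintro g ⟨hc, hd⟩
  rw [SetLike.mem_coe, center_eq_range_scalar] at hc
  obtain ⟨u, rfl⟩ := hc
  exact ⟨u, by rwa [SetLike.mem_coe, mem_rootsOfUnity, ← det_scalar], rfl⟩

end Matrix.GeneralLinearGroup

attribute [local instance] LieRing.ofAssociativeRing in
theorem Module.End.exists_ne_zero_forall_apply_eq_smul_of_commute {K V : Type*} [Field K]
    [IsAlgClosed K] [AddCommGroup V] [Module K V] [FiniteDimensional K V] [Nontrivial V]
    (S : Set (Module.End K V)) (hS : ∀ f ∈ S, ∀ g ∈ S, Commute f g) :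
    ∃ v : V, v ≠ 0 ∧ ∀ f ∈ S, ∃ c : K, f v = c • v := by
  let L := LieSubalgebra.lieSpan K (Module.End K V) S
  have : IsLieAbelian L := by
    rw [LieSubalgebra.isLieAbelian_lieSpan_iff]
    intro f hf g hg
    rw [Ring.lie_def, (hS f hf g hg).eq, sub_self]
  obtain ⟨χ, hχ⟩ := LieModule.exists_nontrivial_weightSpace_of_isNilpotent K L V
  obtain ⟨⟨v, hv⟩, hv0⟩ := exists_ne (0 : LieModule.weightSpace V χ)
  refine ⟨v, by simpa using hv0, fun f hf => ⟨χ ⟨f, LieSubalgebra.subset_lieSpan hf⟩, ?_⟩⟩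
  rw [LieModule.mem_weightSpace] at hv
  simpa using hv ⟨f, LieSubalgebra.subset_lieSpan hf⟩

theorem stmt_2 (d : ℕ) (G : Subgroup (PGL (d + 1)))
    (hFG : Group.FG G)
    (hVirtAb : ∃ H : Subgroup G, H.FiniteIndex ∧ ∀ a b : H, a * b = b * a) :
    ∃ G' : Subgroup G, G'.FiniteIndex ∧
      ∃ v : Fin (d + 1) → ℂ, v ≠ 0 ∧
        ∀ g : G', ∀ A : Matrix.GeneralLinearGroup (Fin (d + 1)) ℂ,
          (QuotientGroup.mk A : PGL (d + 1)) = ((g : G) : PGL (d + 1)) →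
            ∃ c : ℂ, Matrix.mulVec (A : Matrix (Fin (d + 1)) (Fin (d + 1)) ℂ) v = c • v := by
  obtain ⟨H, hH, hHab⟩ := hVirtAb
  set K := H.map G.subtype
  have hKfg : K.FG := (Group.fg_iff_subgroup_fg K).mp <| Group.fg_of_surjective
    (f := (H.equivMapOfInjective _ G.subtype_injective).toMonoidHom) (MulEquiv.surjective _)
  have hKcomm : ∀ x ∈ K, ∀ y ∈ K, Commute x y := by
    rintro _ ⟨x, hx, rfl⟩ _ ⟨y, hy, rfl⟩
    exact congrArg (fun h : H => ((h : G) : PGL (d + 1))) (hHab ⟨x, hx⟩ ⟨y, hy⟩)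
  obtain ⟨J, hJK, hJ, hJcomm⟩ := exists_relIndex_ne_zero_forall_commute_of_ker_le_center
    (QuotientGroup.mk'_surjective _) (QuotientGroup.ker_mk' _).le hKfg
    Matrix.GeneralLinearGroup.finite_center_inf_ker_det fun A B hA hB =>
      Matrix.GeneralLinearGroup.commutatorElement_mem_center_inf_ker_det (hKcomm _ hA _ hB)
  refine ⟨J.subgroupOf G, ⟨?_⟩, ?_⟩
  · have hKG : K.relIndex G = H.index := by
      rw [relIndex, subgroupOf, comap_map_eq_self_of_injective G.subtype_injective]
    rw [← relIndex, ← relIndex_mul_relIndex J K G hJK (map_subtype_le H), hKG]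
    exact mul_ne_zero hJ hH.index_ne_zero
  · obtain ⟨v, hv0, hv⟩ := Module.End.exists_ne_zero_forall_apply_eq_smul_of_commute
      ((fun A : GL (Fin (d + 1)) ℂ => Matrix.toLinAlgEquiv' (A : Matrix (Fin (d + 1)) _ ℂ)) ''
        {A | (A : PGL (d + 1)) ∈ J}) (by
        rintro _ ⟨A, hA, rfl⟩ _ ⟨B, hB, rfl⟩
        exact (hJcomm A B hA hB).units_val.map Matrix.toLinAlgEquiv')
    refine ⟨v, hv0, fun g A hA => ?_⟩
    obtain ⟨c, hc⟩ := hv _ ⟨A, show (A : PGL (d + 1)) ∈ J from hA ▸ g.2, rfl⟩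
    exact ⟨c, by simpa using hc⟩
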